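/- arXiv:2604.04955 — 2 statements merged into one kernel-verified Lean document; each statement's English description precedes it below -/
import Mathlib

section
/- Let k₁, k₂, d, w, z be integers with k₁ ≠ 0, d ≠ 0, w ≠ 0, and set s = d/w. Let γ = (√5 − 1)/2 be the golden ratio and define Γ = −k₂/k₁ − s/(z + γ). Then there exists a constant C > 0 such that for all integers m₁, m₂ with m₁ ≠ 0, one has |m₁ Γ + m₂| ≥ C/|m₁|. -/
open Polynomial IntermediateField

/-!
Γ is an irrational element of `ℚ(γ)`, a field of degree two over `ℚ`, so Γ is a root of a
nonzero integer polynomial of degree at most two. Liouville's inequality for such a root `ω`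
gives `|ω - p/q| ≥ c/q²`, which is the strong Diophantine condition.
-/

def StrongDiophantine (ω : ℝ) : Prop :=
  ∃ C : ℝ, 0 < C ∧ ∀ m₁ m₂ : ℤ, m₁ ≠ 0 → C / |(m₁ : ℝ)| ≤ |(m₁ : ℝ) * ω + m₂|

theorem StrongDiophantine.of_forall_pos {ω C : ℝ} (hC : 0 < C)
    (h : ∀ (n : ℕ) (m : ℤ), 0 < n → C / n ≤ |n * ω + m|) : StrongDiophantine ω := by
  refine ⟨C, hC, fun m₁ m₂ hm₁ => ?_⟩
  have hn : 0 < m₁.natAbs := Int.natAbs_pos.mpr hm₁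
  rcases Int.natAbs_eq m₁ with h₁ | h₁ <;> rw [h₁]
  · simpa using h _ m₂ hn
  · rw [← abs_neg (_ + _)]
    simpa [neg_add, add_comm] using h _ (-m₂) hn

theorem StrongDiophantine.of_irrational_of_aeval_eq_zero {ω : ℝ} (hω : Irrational ω)
    {f : ℤ[X]} (hf0 : f ≠ 0) (hf : f.natDegree ≤ 2) (hfω : aeval ω f = 0) :
    StrongDiophantine ω := by
  obtain ⟨A, hA, hL⟩ :=
    Liouville.exists_pos_real_of_irrational_root hω hf0 (by rwa [eval_map, ← aeval_def])
  refine .of_forall_pos (inv_pos.mpr hA) fun n m hn => ?_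
  have hn₁ : (1 : ℝ) ≤ n := by exact_mod_cast hn
  have hcast : ((n - 1 : ℕ) : ℝ) + 1 = n := by rw [Nat.cast_sub hn]; push_cast; ring
  have hdist : ω - ((-m : ℤ) : ℝ) / n = (n * ω + m) / n := by field_simp; push_cast; ring
  have key := hL (-m) (n - 1)
  rw [hcast, hdist, abs_div, Nat.abs_cast] at key
  rw [div_le_iff₀ (by positivity), inv_le_iff_one_le_mul₀ hA]
  calc 1 ≤ (n : ℝ) ^ f.natDegree * (|n * ω + m| / n * A) := key
    _ ≤ (n : ℝ) ^ 2 * (|n * ω + m| / n * A) := by gcongr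
    _ = |n * ω + m| * n * A := by field_simp

theorem exists_natDegree_le_aeval_eq_zero_of_mem_adjoin {F L : Type*} [Field F] [Field L]
    [Algebra F L] {α x : L} {p : F[X]} (hp0 : p ≠ 0) (hpα : aeval α p = 0) (hx : x ∈ F⟮α⟯) :
    ∃ q : F[X], q ≠ 0 ∧ q.natDegree ≤ p.natDegree ∧ aeval x q = 0 := by
  have hα : IsIntegral F α := IsAlgebraic.isIntegral ⟨p, hp0, hpα⟩
  have := adjoin.finiteDimensional hα
  let y : F⟮α⟯ := ⟨x, hx⟩
  refine ⟨minpoly F y, minpoly.ne_zero (.of_finite F y), ?_, minpoly_eq y ▸ minpoly.aeval F x⟩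
  calc (minpoly F y).natDegree ≤ Module.finrank F F⟮α⟯ := minpoly.natDegree_le y
    _ = (minpoly F α).natDegree := adjoin.finrank hα
    _ ≤ p.natDegree := natDegree_le_natDegree (minpoly.degree_le_of_ne_zero F α hp0 hpα)

theorem exists_int_natDegree_le_aeval_eq_zero {A : Type*} [CommRing A] [Algebra ℚ A] {x : A}
    {q : ℚ[X]} (hq0 : q ≠ 0) (hqx : aeval x q = 0) :
    ∃ f : ℤ[X], f ≠ 0 ∧ f.natDegree ≤ q.natDegree ∧ aeval x f = 0 :=
  ⟨IsLocalization.integerNormalization (nonZeroDivisors ℤ) q,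
    mt IsFractionRing.integerNormalization_eq_zero_iff.mp hq0,
    natDegree_le_natDegree (degree_mono (IsLocalization.integerNormalization_support _ q)),
    IsLocalization.integerNormalization_aeval_eq_zero _ q hqx⟩

theorem StrongDiophantine.of_mem_adjoin {α x : ℝ} {p : ℚ[X]} (hp0 : p ≠ 0)
    (hp : p.natDegree ≤ 2) (hpα : aeval α p = 0) (hx : x ∈ ℚ⟮α⟯) (hirr : Irrational x) :
    StrongDiophantine x := by
  obtain ⟨q, hq0, hqdeg, hqx⟩ := exists_natDegree_le_aeval_eq_zero_of_mem_adjoin hp0 hpα hx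
  obtain ⟨f, hf0, hfdeg, hfx⟩ := exists_int_natDegree_le_aeval_eq_zero hq0 hqx
  exact .of_irrational_of_aeval_eq_zero hirr hf0 (hfdeg.trans (hqdeg.trans hp)) hfx

theorem gamma_strong_diophantine_general
    (k₁ k₂ d w z : ℤ) (hd : d ≠ 0) (hw : w ≠ 0)
    (s γ Γ : ℝ)
    (hs : s = (d : ℝ) / (w : ℝ))
    (hγ : γ = (Real.sqrt 5 - 1) / 2)
    (hΓ : Γ = -(k₂ : ℝ) / (k₁ : ℝ) - s / ((z : ℝ) + γ)) :
    ∃ C : ℝ, 0 < C ∧ ∀ m₁ m₂ : ℤ, m₁ ≠ 0 →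
      C / |(m₁ : ℝ)| ≤ |(m₁ : ℝ) * Γ + (m₂ : ℝ)| := by
  have hγψ : γ = -Real.goldenConj := by rw [hγ]; ring
  have hγ_root : aeval γ (X ^ 2 + X - 1 : ℚ[X]) = 0 := by
    simp only [map_sub, map_add, map_pow, aeval_X, map_one, hγψ]
    linear_combination Real.goldenConj_sq
  have hΓ_eq : Γ = ((-k₂ / k₁ : ℚ) : ℝ) - ((d / w : ℚ) : ℝ) * ((z : ℝ) + γ)⁻¹ := by
    rw [hΓ, hs]; push_cast; ring
  have hΓ_irr : Irrational Γ := by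
    rw [hΓ_eq, hγψ]
    exact ((Real.goldenConj_irrational.neg.intCast_add z).inv.ratCast_mul
      (by simp [hd, hw])).ratCast_sub _
  have hΓ_mem : Γ ∈ ℚ⟮γ⟯ := by
    rw [hΓ_eq]
    exact sub_mem (SubfieldClass.ratCast_mem _ _) (mul_mem (SubfieldClass.ratCast_mem _ _)
      (inv_mem (add_mem (intCast_mem _ _) (mem_adjoin_simple_self ℚ γ))))
  have hp : (X ^ 2 + X - 1 : ℚ[X]).natDegree = 2 := by compute_degree!
  exact StrongDiophantine.of_mem_adjoin (ne_zero_of_natDegree_gt (hp ▸ one_lt_two)) hp.le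
    hγ_root hΓ_mem hΓ_irr

/-- the sequence element Γ = −k₂/k₁ − s/(z + γ), with s = d/w rational
and γ the golden ratio, satisfies the strong Diophantine condition. -/
theorem gamma_strong_diophantine
    (k₁ k₂ d w z : ℤ) (hk₁ : k₁ ≠ 0) (hd : d ≠ 0) (hw : w ≠ 0)
    (s γ Γ : ℝ)
    (hs : s = (d : ℝ) / (w : ℝ))
    (hγ : γ = (Real.sqrt 5 - 1) / 2)
    (hΓ : Γ = -(k₂ : ℝ) / (k₁ : ℝ) - s / ((z : ℝ) + γ)) :
    ∃ C : ℝ, 0 < C ∧ ∀ m₁ m₂ : ℤ, m₁ ≠ 0 →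
      C / |(m₁ : ℝ)| ≤ |(m₁ : ℝ) * Γ + (m₂ : ℝ)| :=
  gamma_strong_diophantine_general k₁ k₂ d w z hd hw s γ Γ hs hγ hΓ
end

section
/- Let α be the real root of x³ + x² − 1 = 0. Let b₁, b₂ and a₁, a₂, a₃, a₄ be rational numbers with a₁a₄ − a₂a₃ ≠ 0, and define ω₁ = b₁ + a₁α + a₂α², ω₂ = b₂ + a₃α + a₄α², and the frequency vector ω = (ω₁, ω₂, 1) ∈ ℝ³. Then ω satisfies the Diophantine condition: there exists a constant C > 0 such that for all k = (k₁, k₂, k₃) ∈ ℤ³ \ {0}, one has |k₁ω₁ + k₂ω₂ + k₃| ≥ C/‖k‖₁², where ‖k‖₁ = |k₁| + |k₂| + |k₃|. -/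
open Polynomial


lemma cubic_no_rat_root (x : ℚ) : x^3 + x^2 - 1 ≠ 0 := by
  intro h
  set n : ℤ := x.num with hn
  set d : ℤ := (x.den : ℤ) with hd
  have hd0 : 0 < d := by rw [hd]; exact_mod_cast x.pos
  have hxd : (n : ℚ) = x * d := by
    rw [hn, hd]
    rw [← div_eq_iff (by exact_mod_cast x.den_nz : ((x.den:ℤ):ℚ) ≠ 0)]
    exact_mod_cast Rat.num_div_den x
  have key : n^3 + n^2*d - d^3 = 0 := by
    have : ((n^3 + n^2*d - d^3 : ℤ) : ℚ) = (x^3 + x^2 - 1) * d^3 := by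
      push_cast [hxd]; ring
    rw [h, zero_mul] at this
    exact_mod_cast this
  have hdvd : d ∣ n^3 := ⟨d^2 - n^2, by linarith⟩
  have hcop : IsCoprime d n := by
    rw [Int.isCoprime_iff_gcd_eq_one, Int.gcd_comm]
    exact x.reduced
  have : IsUnit d := (hcop.pow_right (n := 3)).isUnit_of_dvd hdvd
  have hd1 : d = 1 := by
    rcases Int.isUnit_iff.mp this with h1 | h1
    · exact h1
    · omega
  rw [hd1] at key
  rcases lt_trichotomy n 0 with hlt | heq | hgt
  · nlinarith
  · rw [heq] at key; norm_num at key
  · nlinarith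

lemma cubic_irred : Irreducible (X^3 + X^2 - 1 : ℚ[X]) := by
  have hdeg : (X^3 + X^2 - 1 : ℚ[X]).natDegree = 3 := by compute_degree!
  rw [Polynomial.irreducible_iff_roots_eq_zero_of_degree_le_three
      (by rw [hdeg]; norm_num) (by rw [hdeg])]
  rw [Multiset.eq_zero_iff_forall_notMem]
  intro x hx
  have hne : (X^3 + X^2 - 1 : ℚ[X]) ≠ 0 := by
    intro h; rw [h] at hdeg; simp at hdeg
  rw [mem_roots hne] at hx
  have : x^3 + x^2 - 1 = 0 := by simpa [IsRoot] using hx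
  exact cubic_no_rat_root x this

lemma aux_ne {K : Type*} [Field K] [CharZero K] (β : K) (hβ : β^3 + β^2 - 1 = 0)
    (m₀ m₁ m₂ : ℤ) (hm : ¬(m₀ = 0 ∧ m₁ = 0 ∧ m₂ = 0)) :
    (m₀ : K) + (m₁ : K) * β + (m₂ : K) * β^2 ≠ 0 := by
  intro h0
  have hmonic : (X^3 + X^2 - 1 : ℚ[X]).Monic := by monicity!
  have haev : aeval β (X^3 + X^2 - 1 : ℚ[X]) = 0 := by
    simp only [map_sub, map_add, map_pow, aeval_X, map_one]
    exact hβ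
  have hint : IsIntegral ℚ β := ⟨X^3 + X^2 - 1, hmonic, haev⟩
  have hmin : minpoly ℚ β = X^3 + X^2 - 1 :=
    (minpoly.eq_of_irreducible_of_monic cubic_irred haev hmonic).symm
  set p : ℚ[X] := C (m₀ : ℚ) + C (m₁ : ℚ) * X + C (m₂ : ℚ) * X^2 with hp
  have hpne : p ≠ 0 := by
    intro hpz
    apply hm
    refine ⟨?_, ?_, ?_⟩
    · have := congrArg (fun q => Polynomial.coeff q 0) hpz
      simp only [hp, coeff_add, coeff_C_mul, coeff_C, coeff_X_pow, coeff_zero] at this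
      norm_num at this
      exact_mod_cast this
    · have := congrArg (fun q => Polynomial.coeff q 1) hpz
      simp only [hp, coeff_add, coeff_C_mul, coeff_C, coeff_X, coeff_X_pow, coeff_zero] at this
      norm_num at this
      exact_mod_cast this
    · have := congrArg (fun q => Polynomial.coeff q 2) hpz
      simp only [hp, coeff_add, coeff_C_mul, coeff_C, coeff_X, coeff_X_pow, coeff_zero] at this
      norm_num at this
      exact_mod_cast this
  have haevp : aeval β p = 0 := by
    rw [hp]
    simp only [map_add, map_mul, map_pow, aeval_X, aeval_C, map_intCast]
    linear_combination h0
  have hdle := minpoly.degree_le_of_ne_zero ℚ β hpne haevp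
  rw [hmin] at hdle
  have hd3 : (X^3 + X^2 - 1 : ℚ[X]).degree = 3 := by compute_degree!
  have hdp : p.degree ≤ 2 := by rw [hp]; compute_degree
  rw [hd3] at hdle
  have := hdle.trans hdp
  norm_num at this

lemma E_bound (α x y z : ℝ) (h0 : 0 < α) (h1 : α < 1) :
    |x^2 + x*y*(-1-α) + x*z*(1-α^2) + y^2*(α^2+α) - y*z*(1+α+α^2) + z^2*(α+1)|
      ≤ 3 * (|x| + |y| + |z|) ^ 2 := by
  have p01 : x*y ≤ |x| * |y| := by rw [← abs_mul]; exact le_abs_self _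
  have n01 : -(|x| * |y|) ≤ x*y := by rw [← abs_mul]; exact neg_abs_le _
  have p02 : x*z ≤ |x| * |z| := by rw [← abs_mul]; exact le_abs_self _
  have n02 : -(|x| * |z|) ≤ x*z := by rw [← abs_mul]; exact neg_abs_le _
  have p12 : y*z ≤ |y| * |z| := by rw [← abs_mul]; exact le_abs_self _
  have n12 : -(|y| * |z|) ≤ y*z := by rw [← abs_mul]; exact neg_abs_le _
  have sq0 : x^2 = |x|^2 := (sq_abs _).symm
  have sq1 : y^2 = |y|^2 := (sq_abs _).symm
  have sq2 : z^2 = |z|^2 := (sq_abs _).symm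
  have a0 : (0:ℝ) ≤ |x| := abs_nonneg _
  have a1 : (0:ℝ) ≤ |y| := abs_nonneg _
  have a2 : (0:ℝ) ≤ |z| := abs_nonneg _
  have hα2 : α^2 < 1 := by nlinarith
  rw [abs_le]
  constructor
  · nlinarith [mul_nonneg (by linarith : (0:ℝ) ≤ 1 + α) (by linarith : (0:ℝ) ≤ |x| * |y| + x*y),
      mul_nonneg (by linarith : (0:ℝ) ≤ 1 - α^2) (by linarith : (0:ℝ) ≤ |x| * |z| + x*z),
      mul_nonneg (by positivity : (0:ℝ) ≤ 1 + α + α^2) (by linarith : (0:ℝ) ≤ |y| * |z| + y*z),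
      mul_nonneg (by nlinarith : (0:ℝ) ≤ 2 - α - α^2) (sq_nonneg y),
      mul_nonneg (by linarith : (0:ℝ) ≤ 1 - α) (sq_nonneg z),
      mul_nonneg a0 a1, mul_nonneg a0 a2, mul_nonneg a1 a2, sq_nonneg x]
  · nlinarith [mul_nonneg (by linarith : (0:ℝ) ≤ 1 + α) (by linarith : (0:ℝ) ≤ |x| * |y| - x*y),
      mul_nonneg (by linarith : (0:ℝ) ≤ 1 - α^2) (by linarith : (0:ℝ) ≤ |x| * |z| - x*z),
      mul_nonneg (by positivity : (0:ℝ) ≤ 1 + α + α^2) (by linarith : (0:ℝ) ≤ |y| * |z| - y*z),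
      mul_nonneg (by nlinarith : (0:ℝ) ≤ α + α^2) (sq_nonneg y),
      mul_nonneg (by linarith : (0:ℝ) ≤ 1 + α) (sq_nonneg z),
      mul_nonneg a0 a1, mul_nonneg a0 a2, mul_nonneg a1 a2, sq_nonneg x]

lemma key_bound (α : ℝ) (hα : α ^ 3 + α ^ 2 - 1 = 0) (m₀ m₁ m₂ : ℤ)
    (hm : ¬(m₀ = 0 ∧ m₁ = 0 ∧ m₂ = 0)) :
    1 / (3 * ((|m₀| + |m₁| + |m₂| : ℤ) : ℝ) ^ 2) ≤
      |(m₀ : ℝ) + (m₁ : ℝ) * α + (m₂ : ℝ) * α ^ 2| := by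
  have hα0 : 0 < α := by nlinarith [sq_nonneg α, sq_nonneg (α + 1), sq_nonneg (α - 1)]
  have hα1 : α < 1 := by nlinarith
  have hα3 : 1 / 3 < α := by nlinarith
  have htnn : (0:ℝ) ≤ 3 * α ^ 2 + 2 * α - 1 := by nlinarith
  set t : ℝ := Real.sqrt (3 * α ^ 2 + 2 * α - 1) with htdef
  have ht : t ^ 2 = 3 * α ^ 2 + 2 * α - 1 := Real.sq_sqrt htnn
  have hαC : (α : ℂ) ^ 3 + (α : ℂ) ^ 2 - 1 = 0 := by exact_mod_cast hα
  have htC : ((t : ℂ)) ^ 2 = 3 * (α : ℂ) ^ 2 + 2 * (α : ℂ) - 1 := by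
    rw [← Complex.ofReal_pow, ht]; push_cast; ring
  set β : ℂ := (-(1 + (α : ℂ)) + (t : ℂ) * Complex.I) / 2 with hβdef
  have hq : β ^ 2 + (1 + (α : ℂ)) * β + ((α : ℂ) ^ 2 + (α : ℂ)) = 0 := by
    rw [hβdef]
    linear_combination ((t : ℂ) ^ 2 / 4) * Complex.I_sq - htC / 4
  have hβ3 : β ^ 3 + β ^ 2 - 1 = 0 := by
    linear_combination (β - (α : ℂ)) * hq + hαC
  have hqγ : (-(1 + (α : ℂ)) - β) ^ 2 + (1 + (α : ℂ)) * (-(1 + (α : ℂ)) - β)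
      + ((α : ℂ) ^ 2 + (α : ℂ)) = 0 := by linear_combination hq
  have hγ3 : (-(1 + (α : ℂ)) - β) ^ 3 + (-(1 + (α : ℂ)) - β) ^ 2 - 1 = 0 := by
    linear_combination ((-(1 + (α : ℂ)) - β) - (α : ℂ)) * hqγ + hαC
  set F : ℤ := m₀^3 - m₀^2*m₁ + m₀^2*m₂ - 3*m₀*m₁*m₂ + 2*m₀*m₂^2 + m₁^3 - m₁^2*m₂ + m₂^3
    with hFdef
  have hFC : (F : ℂ) =
      ((m₀ : ℂ) + (m₁ : ℂ) * (α : ℂ) + (m₂ : ℂ) * (α : ℂ) ^ 2) *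
      (((m₀ : ℂ) + (m₁ : ℂ) * β + (m₂ : ℂ) * β ^ 2) *
       ((m₀ : ℂ) + (m₁ : ℂ) * (-(1 + (α : ℂ)) - β) + (m₂ : ℂ) * (-(1 + (α : ℂ)) - β) ^ 2)) := by
    rw [hFdef]
    push_cast
    linear_combination
      (-((m₀:ℂ)*(m₁:ℂ)*(m₂:ℂ) - (m₀:ℂ)*(m₁:ℂ)^2 + 2*(m₀:ℂ)^2*(m₂:ℂ)
        + β*(m₀:ℂ)*(m₂:ℂ)^2 + β^2*(m₀:ℂ)*(m₂:ℂ)^2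
        + (α:ℂ)*(m₁:ℂ)^2*(m₂:ℂ) - (α:ℂ)*(m₁:ℂ)^3 - (α:ℂ)*(m₀:ℂ)*(m₂:ℂ)^2
        + 3*(α:ℂ)*(m₀:ℂ)*(m₁:ℂ)*(m₂:ℂ)
        + (α:ℂ)*β*(m₁:ℂ)*(m₂:ℂ)^2 + (α:ℂ)*β*(m₀:ℂ)*(m₂:ℂ)^2 + (α:ℂ)*β^2*(m₁:ℂ)*(m₂:ℂ)^2
        + (α:ℂ)^2*(m₀:ℂ)*(m₂:ℂ)^2 + (α:ℂ)^2*β*(m₂:ℂ)^3 + (α:ℂ)^2*β*(m₁:ℂ)*(m₂:ℂ)^2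
        + (α:ℂ)^2*β^2*(m₂:ℂ)^3 - (α:ℂ)^3*(m₂:ℂ)^3 + (α:ℂ)^3*β*(m₂:ℂ)^3
        - (α:ℂ)^4*(m₂:ℂ)^3)) * hq
      + (-((m₂:ℂ)^3 - (m₁:ℂ)^2*(m₂:ℂ) + (m₁:ℂ)^3 + 2*(m₀:ℂ)*(m₂:ℂ)^2
        - 3*(m₀:ℂ)*(m₁:ℂ)*(m₂:ℂ) + (α:ℂ)^2*(m₂:ℂ)^3 + (α:ℂ)^3*(m₂:ℂ)^3)) * hαC
  have hne1 := aux_ne (K := ℂ) (α : ℂ) hαC m₀ m₁ m₂ hm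
  have hne2 := aux_ne (K := ℂ) β hβ3 m₀ m₁ m₂ hm
  have hne3 := aux_ne (K := ℂ) (-(1 + (α : ℂ)) - β) hγ3 m₀ m₁ m₂ hm
  have hF0 : F ≠ 0 := by
    intro h
    rw [h] at hFC
    exact (mul_ne_zero hne1 (mul_ne_zero hne2 hne3)) (by exact_mod_cast hFC.symm)
  have hF1 : (1 : ℝ) ≤ |(F : ℝ)| := by
    rw [← Int.cast_abs]
    exact_mod_cast Int.one_le_abs hF0
  set E : ℝ := (m₀:ℝ)^2 + (m₀:ℝ)*(m₁:ℝ)*(-1-α) + (m₀:ℝ)*(m₂:ℝ)*(1-α^2)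
      + (m₁:ℝ)^2*(α^2+α) - (m₁:ℝ)*(m₂:ℝ)*(1+α+α^2) + (m₂:ℝ)^2*(α+1) with hEdef
  have hFR : (F : ℝ) = ((m₀ : ℝ) + (m₁ : ℝ) * α + (m₂ : ℝ) * α ^ 2) * E := by
    rw [hFdef, hEdef]
    push_cast
    linear_combination (-((m₂:ℝ)^3 - (m₁:ℝ)^2*(m₂:ℝ) + (m₁:ℝ)^3 + (m₀:ℝ)*(m₂:ℝ)^2
      - 2*(m₀:ℝ)*(m₁:ℝ)*(m₂:ℝ) - α*(m₁:ℝ)*(m₂:ℝ)^2 + α*(m₁:ℝ)^2*(m₂:ℝ)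
      - α*(m₀:ℝ)*(m₂:ℝ)^2)) * hα
  set S : ℝ := ((|m₀| + |m₁| + |m₂| : ℤ) : ℝ) with hSdef
  have hSeq : S = |(m₀:ℝ)| + |(m₁:ℝ)| + |(m₂:ℝ)| := by rw [hSdef]; push_cast; ring
  have hS1 : 1 ≤ S := by
    have h' : m₀ ≠ 0 ∨ m₁ ≠ 0 ∨ m₂ ≠ 0 := by tauto
    have h0 : (1:ℤ) ≤ |m₀| + |m₁| + |m₂| := by
      have g0 := abs_nonneg m₀
      have g1 := abs_nonneg m₁
      have g2 := abs_nonneg m₂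
      rcases h' with h | h | h
      · have h1 := Int.one_le_abs h; linarith
      · have h1 := Int.one_le_abs h; linarith
      · have h1 := Int.one_le_abs h; linarith
    rw [hSdef]
    exact_mod_cast h0
  have hEb : |E| ≤ 3 * S ^ 2 := by
    rw [hSeq, hEdef]
    exact E_bound α _ _ _ hα0 hα1
  have hprod : (1:ℝ) ≤ |(m₀:ℝ) + (m₁:ℝ) * α + (m₂:ℝ) * α ^ 2| * |E| := by
    calc (1:ℝ) ≤ |(F:ℝ)| := hF1
    _ = |((m₀:ℝ) + (m₁:ℝ) * α + (m₂:ℝ) * α ^ 2) * E| := by rw [hFR]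
    _ = |(m₀:ℝ) + (m₁:ℝ) * α + (m₂:ℝ) * α ^ 2| * |E| := abs_mul _ _
  have hS0 : (0:ℝ) < S := by linarith
  have h4 : |(m₀:ℝ) + (m₁:ℝ) * α + (m₂:ℝ) * α ^ 2| * |E|
      ≤ |(m₀:ℝ) + (m₁:ℝ) * α + (m₂:ℝ) * α ^ 2| * (3 * S ^ 2) :=
    mul_le_mul_of_nonneg_left hEb (abs_nonneg _)
  rw [div_le_iff₀ (by positivity)]
  linarith

lemma rat_clear (q : ℚ) (r : ℤ) : ((q.num * r : ℤ) : ℚ) = q * ((q.den : ℤ) * r : ℤ) := by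
  have hnum : (q.num : ℚ) = q * (q.den : ℚ) := by
    rw [← div_eq_iff (by exact_mod_cast q.den_nz : ((q.den:ℚ)) ≠ 0)]
    exact Rat.num_div_den q
  push_cast
  rw [hnum]
  ring

/-- the frequency vector ω = (ω₁, ω₂, 1) obtained from an invertible
rational affine transformation of (1, α, α²), where α is the real root of
x³ + x² − 1 = 0, satisfies the Diophantine condition with exponent τ = 2. -/
theorem frequency_vector_diophantine
    (α : ℝ) (hα : α ^ 3 + α ^ 2 - 1 = 0)
    (b₁ b₂ a₁ a₂ a₃ a₄ : ℚ) (hdet : a₁ * a₄ - a₂ * a₃ ≠ 0)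
    (ω₁ ω₂ : ℝ)
    (hω₁ : ω₁ = (b₁ : ℝ) + (a₁ : ℝ) * α + (a₂ : ℝ) * α ^ 2)
    (hω₂ : ω₂ = (b₂ : ℝ) + (a₃ : ℝ) * α + (a₄ : ℝ) * α ^ 2) :
    ∃ C : ℝ, 0 < C ∧ ∀ k₁ k₂ k₃ : ℤ, ¬(k₁ = 0 ∧ k₂ = 0 ∧ k₃ = 0) →
      C / (((|k₁| + |k₂| + |k₃| : ℤ) : ℝ)) ^ 2 ≤
        |(k₁ : ℝ) * ω₁ + (k₂ : ℝ) * ω₂ + (k₃ : ℝ)| := by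
  set d : ℤ := (b₁.den : ℤ) * b₂.den * a₁.den * a₂.den * a₃.den * a₄.den with hddef
  have hd0 : 0 < d := by
    rw [hddef]
    positivity
  set B₁ : ℤ := b₁.num * ((b₂.den : ℤ) * a₁.den * a₂.den * a₃.den * a₄.den) with hB₁def
  set B₂ : ℤ := b₂.num * ((b₁.den : ℤ) * a₁.den * a₂.den * a₃.den * a₄.den) with hB₂def
  set A₁ : ℤ := a₁.num * ((b₁.den : ℤ) * b₂.den * a₂.den * a₃.den * a₄.den) with hA₁def
  set A₂ : ℤ := a₂.num * ((b₁.den : ℤ) * b₂.den * a₁.den * a₃.den * a₄.den) with hA₂def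
  set A₃ : ℤ := a₃.num * ((b₁.den : ℤ) * b₂.den * a₁.den * a₂.den * a₄.den) with hA₃def
  set A₄ : ℤ := a₄.num * ((b₁.den : ℤ) * b₂.den * a₁.den * a₂.den * a₃.den) with hA₄def
  clear_value d B₁ B₂ A₁ A₂ A₃ A₄
  -- rational identities
  have hB₁q : ((B₁ : ℤ) : ℚ) = b₁ * (d : ℚ) := by
    rw [hB₁def, hddef]; rw [show ((b₁.den:ℤ) * b₂.den * a₁.den * a₂.den * a₃.den * a₄.den : ℤ)
      = (b₁.den : ℤ) * ((b₂.den : ℤ) * a₁.den * a₂.den * a₃.den * a₄.den) by ring]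
    exact_mod_cast rat_clear b₁ _
  have hB₂q : ((B₂ : ℤ) : ℚ) = b₂ * (d : ℚ) := by
    rw [hB₂def, hddef]; rw [show ((b₁.den:ℤ) * b₂.den * a₁.den * a₂.den * a₃.den * a₄.den : ℤ)
      = (b₂.den : ℤ) * ((b₁.den : ℤ) * a₁.den * a₂.den * a₃.den * a₄.den) by ring]
    exact_mod_cast rat_clear b₂ _
  have hA₁q : ((A₁ : ℤ) : ℚ) = a₁ * (d : ℚ) := by
    rw [hA₁def, hddef]; rw [show ((b₁.den:ℤ) * b₂.den * a₁.den * a₂.den * a₃.den * a₄.den : ℤ)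
      = (a₁.den : ℤ) * ((b₁.den : ℤ) * b₂.den * a₂.den * a₃.den * a₄.den) by ring]
    exact_mod_cast rat_clear a₁ _
  have hA₂q : ((A₂ : ℤ) : ℚ) = a₂ * (d : ℚ) := by
    rw [hA₂def, hddef]; rw [show ((b₁.den:ℤ) * b₂.den * a₁.den * a₂.den * a₃.den * a₄.den : ℤ)
      = (a₂.den : ℤ) * ((b₁.den : ℤ) * b₂.den * a₁.den * a₃.den * a₄.den) by ring]
    exact_mod_cast rat_clear a₂ _
  have hA₃q : ((A₃ : ℤ) : ℚ) = a₃ * (d : ℚ) := by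
    rw [hA₃def, hddef]; rw [show ((b₁.den:ℤ) * b₂.den * a₁.den * a₂.den * a₃.den * a₄.den : ℤ)
      = (a₃.den : ℤ) * ((b₁.den : ℤ) * b₂.den * a₁.den * a₂.den * a₄.den) by ring]
    exact_mod_cast rat_clear a₃ _
  have hA₄q : ((A₄ : ℤ) : ℚ) = a₄ * (d : ℚ) := by
    rw [hA₄def, hddef]; rw [show ((b₁.den:ℤ) * b₂.den * a₁.den * a₂.den * a₃.den * a₄.den : ℤ)
      = (a₄.den : ℤ) * ((b₁.den : ℤ) * b₂.den * a₁.den * a₂.den * a₃.den) by ring]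
    exact_mod_cast rat_clear a₄ _
  -- real versions
  have hB₁r : ((B₁ : ℤ) : ℝ) = (b₁ : ℝ) * (d : ℝ) := by exact_mod_cast congrArg (fun q : ℚ => (q : ℝ)) hB₁q
  have hB₂r : ((B₂ : ℤ) : ℝ) = (b₂ : ℝ) * (d : ℝ) := by exact_mod_cast congrArg (fun q : ℚ => (q : ℝ)) hB₂q
  have hA₁r : ((A₁ : ℤ) : ℝ) = (a₁ : ℝ) * (d : ℝ) := by exact_mod_cast congrArg (fun q : ℚ => (q : ℝ)) hA₁q
  have hA₂r : ((A₂ : ℤ) : ℝ) = (a₂ : ℝ) * (d : ℝ) := by exact_mod_cast congrArg (fun q : ℚ => (q : ℝ)) hA₂q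
  have hA₃r : ((A₃ : ℤ) : ℝ) = (a₃ : ℝ) * (d : ℝ) := by exact_mod_cast congrArg (fun q : ℚ => (q : ℝ)) hA₃q
  have hA₄r : ((A₄ : ℤ) : ℝ) = (a₄ : ℝ) * (d : ℝ) := by exact_mod_cast congrArg (fun q : ℚ => (q : ℝ)) hA₄q
  -- determinant over ℤ
  have hAdet : A₁ * A₄ - A₂ * A₃ ≠ 0 := by
    intro h
    apply hdet
    have hq : ((A₁ * A₄ - A₂ * A₃ : ℤ) : ℚ) = (a₁ * a₄ - a₂ * a₃) * (d : ℚ)^2 := by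
      push_cast [hA₁q, hA₂q, hA₃q, hA₄q]
      ring
    rw [h] at hq
    have hd0' : ((d:ℚ))^2 ≠ 0 := by
      have : (d:ℚ) ≠ 0 := by exact_mod_cast hd0.ne'
      positivity
    push_cast at hq
    exact (mul_eq_zero.mp hq.symm).resolve_right hd0'
  set c₂ : ℤ := |B₁| + |B₂| + |A₁| + |A₂| + |A₃| + |A₄| + d with hc₂def
  have hc₂pos : 0 < c₂ := by
    rw [hc₂def]
    have := abs_nonneg B₁; have := abs_nonneg B₂; have := abs_nonneg A₁
    have := abs_nonneg A₂; have := abs_nonneg A₃; have := abs_nonneg A₄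
    linarith
  refine ⟨1 / (3 * (d : ℝ) * (c₂ : ℝ)^2), by positivity, ?_⟩
  intro k₁ k₂ k₃ hk
  set m₀ : ℤ := k₁ * B₁ + k₂ * B₂ + k₃ * d with hm₀def
  set m₁ : ℤ := k₁ * A₁ + k₂ * A₃ with hm₁def
  set m₂ : ℤ := k₁ * A₂ + k₂ * A₄ with hm₂def
  clear_value m₀ m₁ m₂
  have hm : ¬(m₀ = 0 ∧ m₁ = 0 ∧ m₂ = 0) := by
    rintro ⟨h0, h1, h2⟩
    apply hk
    have hk₁ : k₁ = 0 := by
      have h3 : (A₁ * A₄ - A₂ * A₃) * k₁ = 0 := by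
        rw [hm₁def] at h1; rw [hm₂def] at h2
        linear_combination A₄ * h1 - A₃ * h2
      rcases mul_eq_zero.mp h3 with h | h
      · exact absurd h hAdet
      · exact h
    have hk₂ : k₂ = 0 := by
      have h3 : (A₁ * A₄ - A₂ * A₃) * k₂ = 0 := by
        rw [hm₁def] at h1; rw [hm₂def] at h2
        linear_combination A₁ * h2 - A₂ * h1
      rcases mul_eq_zero.mp h3 with h | h
      · exact absurd h hAdet
      · exact h
    have hk₃ : k₃ = 0 := by
      rw [hm₀def, hk₁, hk₂] at h0
      simp at h0
      rcases h0 with h | h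
      · exact h
      · exact absurd h hd0.ne'
    exact ⟨hk₁, hk₂, hk₃⟩
  have hkey := key_bound α hα m₀ m₁ m₂ hm
  -- linear identity
  have hlin : (d : ℝ) * ((k₁ : ℝ) * ω₁ + (k₂ : ℝ) * ω₂ + (k₃ : ℝ))
      = (m₀ : ℝ) + (m₁ : ℝ) * α + (m₂ : ℝ) * α ^ 2 := by
    rw [hω₁, hω₂, hm₀def, hm₁def, hm₂def]
    push_cast
    linear_combination (-(k₁ : ℝ)) * hB₁r + (-(k₂ : ℝ)) * hB₂r + (-((k₁ : ℝ) * α)) * hA₁r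
      + (-((k₂ : ℝ) * α)) * hA₃r + (-((k₁ : ℝ) * α^2)) * hA₂r + (-((k₂ : ℝ) * α^2)) * hA₄r
  -- size bounds
  have hK1 : (1:ℤ) ≤ |k₁| + |k₂| + |k₃| := by
    have h' : k₁ ≠ 0 ∨ k₂ ≠ 0 ∨ k₃ ≠ 0 := by tauto
    have g0 := abs_nonneg k₁; have g1 := abs_nonneg k₂; have g2 := abs_nonneg k₃
    rcases h' with h | h | h
    · have := Int.one_le_abs h; linarith
    · have := Int.one_le_abs h; linarith
    · have := Int.one_le_abs h; linarith
  have hSc : |m₀| + |m₁| + |m₂| ≤ c₂ * (|k₁| + |k₂| + |k₃|) := by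
    have h0 : |m₀| ≤ |k₁| * |B₁| + |k₂| * |B₂| + |k₃| * |d| := by
      rw [hm₀def]
      calc |k₁ * B₁ + k₂ * B₂ + k₃ * d| ≤ |k₁ * B₁ + k₂ * B₂| + |k₃ * d| := abs_add_le _ _
      _ ≤ |k₁ * B₁| + |k₂ * B₂| + |k₃ * d| := by linarith [abs_add_le (k₁ * B₁) (k₂ * B₂)]
      _ = |k₁| * |B₁| + |k₂| * |B₂| + |k₃| * |d| := by
        rw [abs_mul k₁ B₁, abs_mul k₂ B₂, abs_mul k₃ d]
    have h1 : |m₁| ≤ |k₁| * |A₁| + |k₂| * |A₃| := by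
      rw [hm₁def]
      calc |k₁ * A₁ + k₂ * A₃| ≤ |k₁ * A₁| + |k₂ * A₃| := abs_add_le _ _
      _ = |k₁| * |A₁| + |k₂| * |A₃| := by rw [abs_mul k₁ A₁, abs_mul k₂ A₃]
    have h2 : |m₂| ≤ |k₁| * |A₂| + |k₂| * |A₄| := by
      rw [hm₂def]
      calc |k₁ * A₂ + k₂ * A₄| ≤ |k₁ * A₂| + |k₂ * A₄| := abs_add_le _ _
      _ = |k₁| * |A₂| + |k₂| * |A₄| := by rw [abs_mul k₁ A₂, abs_mul k₂ A₄]
    have hdabs : |d| = d := abs_of_pos hd0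
    have e1 : |k₁| ≤ |k₁| + |k₂| + |k₃| := by linarith [abs_nonneg k₂, abs_nonneg k₃]
    have e2 : |k₂| ≤ |k₁| + |k₂| + |k₃| := by linarith [abs_nonneg k₁, abs_nonneg k₃]
    have e3 : |k₃| ≤ |k₁| + |k₂| + |k₃| := by linarith [abs_nonneg k₁, abs_nonneg k₂]
    have q1 := mul_le_mul_of_nonneg_right e1 (abs_nonneg B₁)
    have q2 := mul_le_mul_of_nonneg_right e2 (abs_nonneg B₂)
    have q3 := mul_le_mul_of_nonneg_right e3 (abs_nonneg d)
    rw [hdabs] at q3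
    have q4 := mul_le_mul_of_nonneg_right e1 (abs_nonneg A₁)
    have q5 := mul_le_mul_of_nonneg_right e2 (abs_nonneg A₃)
    have q6 := mul_le_mul_of_nonneg_right e1 (abs_nonneg A₂)
    have q7 := mul_le_mul_of_nonneg_right e2 (abs_nonneg A₄)
    rw [hc₂def]
    rw [hdabs] at h0
    have hd' : |d| = d := hdabs
    linarith [q1, q2, q3, q4, q5, q6, q7, h0, h1, h2, hd0]
  -- final chain
  set K : ℝ := ((|k₁| + |k₂| + |k₃| : ℤ) : ℝ) with hKdef
  set S : ℝ := ((|m₀| + |m₁| + |m₂| : ℤ) : ℝ) with hSdef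
  clear_value K S
  have hK1r : (1:ℝ) ≤ K := by rw [hKdef]; exact_mod_cast hK1
  have hScr : S ≤ (c₂ : ℝ) * K := by
    rw [hSdef, hKdef]
    exact_mod_cast hSc
  have hS0 : (0:ℝ) ≤ S := by
    rw [hSdef]
    have := abs_nonneg m₀; have := abs_nonneg m₁; have := abs_nonneg m₂
    exact_mod_cast by linarith
  have hS1 : (1:ℤ) ≤ |m₀| + |m₁| + |m₂| := by
    have h' : m₀ ≠ 0 ∨ m₁ ≠ 0 ∨ m₂ ≠ 0 := by tauto
    have g0 := abs_nonneg m₀; have g1 := abs_nonneg m₁; have g2 := abs_nonneg m₂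
    rcases h' with h | h | h
    · have := Int.one_le_abs h; linarith
    · have := Int.one_le_abs h; linarith
    · have := Int.one_le_abs h; linarith
  have hS1r : (1:ℝ) ≤ S := by rw [hSdef]; exact_mod_cast hS1
  have hSpos : (0:ℝ) < S := lt_of_lt_of_le one_pos hS1r
  have hdr : (0:ℝ) < (d:ℝ) := by exact_mod_cast hd0
  have hcr : (0:ℝ) < (c₂:ℝ) := by exact_mod_cast hc₂pos
  have habs : |(k₁ : ℝ) * ω₁ + (k₂ : ℝ) * ω₂ + (k₃ : ℝ)|
      = |(m₀ : ℝ) + (m₁ : ℝ) * α + (m₂ : ℝ) * α ^ 2| / (d : ℝ) := by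
    rw [← hlin, abs_mul, abs_of_pos hdr]
    field_simp
  rw [habs]
  calc 1 / (3 * (d : ℝ) * (c₂ : ℝ)^2) / K ^ 2
      = 1 / (3 * (d:ℝ) * ((c₂:ℝ) * K)^2) := by ring
    _ ≤ 1 / (3 * (d:ℝ) * S^2) := by
        apply one_div_le_one_div_of_le
        · exact mul_pos (by positivity) (pow_pos hSpos 2)
        · have h2 : S^2 ≤ ((c₂:ℝ) * K)^2 := pow_le_pow_left₀ hS0 hScr 2
          exact mul_le_mul_of_nonneg_left h2 (by positivity)
    _ = (1 / (3 * S^2)) / (d:ℝ) := by ring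
    _ ≤ |(m₀ : ℝ) + (m₁ : ℝ) * α + (m₂ : ℝ) * α ^ 2| / (d : ℝ) := by
        exact div_le_div_of_nonneg_right hkey hdr.le
end
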